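/- arXiv:2602.13222 — 3 statements merged into one kernel-verified Lean document; each statement's English description precedes it below -/
import Mathlib

section
/- A language L ⊆ Σ* over a finite alphabet Σ is regular (recognized by some deterministic finite automaton) if and only if L is recognized by some language model with finite context, where an LM (Γ, δ, C) with Σ ⊆ Γ, a designated start token, and a designated accepting subset F ⊆ Γ recognizes a word w = a₁…aₙ when the alternating process that appends each input symbol aᵢ and then the LM's generated token ends with a generated token in F. -/
/-- Appending a token to a finite context window of length `C`, retaining the most recent `C`
tokens: `(t₁, …, t_C) ↦ (t₂, …, t_C, a)`. -/
def pushToken {Γ : Type} {C : ℕ} (ctx : Fin C → Γ) (a : Γ) : Fin C → Γ :=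
  fun i => if h : (i : ℕ) + 1 < C then ctx ⟨(i : ℕ) + 1, h⟩ else a

/-- The context of the LM `(Γ, δ, C)` after the alternating process on input word `w`: starting
from the context filled with the designated start token, for each input symbol `a` the (embedded)
symbol `ι a` is appended and then the LM's generated token is appended. -/
def lmProcess {A Γ : Type} {C : ℕ} (δ : (Fin C → Γ) → Γ) (ι : A → Γ) (start : Γ)
    (w : List A) : Fin C → Γ :=
  w.foldl (fun ctx a =>
    let ctx' := pushToken ctx (ι a)
    pushToken ctx' (δ ctx')) (fun _ => start)

/-- The LM `(Γ, δ, C)` (with `Σ ⊆ Γ` via `ι`, start token `start`, accepting tokens `F`)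
recognizes `w` when the alternating process ends with a (generated) token in `F`, i.e. the most
recent token of the final context lies in `F`. -/
def lmRecognizes {A Γ : Type} {C : ℕ} (hC : 0 < C) (δ : (Fin C → Γ) → Γ) (ι : A → Γ)
    (start : Γ) (F : Set Γ) (w : List A) : Prop :=
  lmProcess δ ι start w ⟨C - 1, by omega⟩ ∈ F

/-!
A language model with context `C` is a deterministic machine whose state is its context window,
an element of the finite set `Γ ^ C`; one round of the alternating process is a transition of
this machine, so the LM is a DFA on contexts accepting when the last token lies in `F`.
Conversely, a DFA `M` is simulated with context `2` over `Γ = Σ ⊕ S`: after the input symbol `a`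
is appended, the window holds the current state `s` (the previously generated token) and `a`,
and the LM generates `M.step s a`.
-/

section ContextWindow

variable {Γ : Type} {C : ℕ}

lemma pushToken_last (ctx : Fin C → Γ) (a : Γ) (hC : 0 < C) :
    pushToken ctx a ⟨C - 1, by omega⟩ = a :=
  dif_neg (by simp only; omega)

lemma pushToken_of_lt (ctx : Fin C → Γ) (a : Γ) {i : Fin C} (hi : (i : ℕ) + 1 < C) :
    pushToken ctx a i = ctx ⟨i + 1, hi⟩ :=
  dif_pos hi

end ContextWindow

section LMAsDFA

variable {A Γ : Type} {C : ℕ}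

def lmStep (δ : (Fin C → Γ) → Γ) (ι : A → Γ) (ctx : Fin C → Γ) (a : A) : Fin C → Γ :=
  pushToken (pushToken ctx (ι a)) (δ (pushToken ctx (ι a)))

lemma lmProcess_append_singleton (δ : (Fin C → Γ) → Γ) (ι : A → Γ) (start : Γ) (w : List A)
    (a : A) : lmProcess δ ι start (w ++ [a]) = lmStep δ ι (lmProcess δ ι start w) a := by
  simp only [lmProcess, lmStep, List.foldl_append, List.foldl_cons, List.foldl_nil]

def lmDFA (hC : 0 < C) (δ : (Fin C → Γ) → Γ) (ι : A → Γ) (start : Γ) (F : Set Γ) :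
    DFA A (Fin C → Γ) where
  step := lmStep δ ι
  start := fun _ => start
  accept := {ctx | ctx ⟨C - 1, by omega⟩ ∈ F}

lemma mem_lmDFA_accepts (hC : 0 < C) (δ : (Fin C → Γ) → Γ) (ι : A → Γ) (start : Γ) (F : Set Γ)
    (w : List A) : w ∈ (lmDFA hC δ ι start F).accepts ↔ lmRecognizes hC δ ι start F w :=
  Iff.rfl

theorem Language.isRegular_of_lmRecognizes [Fintype Γ] {L : Language A} (hC : 0 < C)
    (δ : (Fin C → Γ) → Γ) (ι : A → Γ) (start : Γ) (F : Set Γ)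
    (hL : ∀ w, w ∈ L ↔ lmRecognizes hC δ ι start F w) : L.IsRegular :=
  ⟨Fin C → Γ, inferInstance, lmDFA hC δ ι start F,
    Set.ext fun w => (mem_lmDFA_accepts hC δ ι start F w).trans (hL w).symm⟩

end LMAsDFA

namespace DFA

variable {A σ : Type} (M : DFA A σ)

/-- Only contexts of the form `(inr s, inl a)` are reached; the other branch is arbitrary. -/
def toLM (ctx : Fin 2 → A ⊕ σ) : A ⊕ σ :=
  match ctx 0, ctx 1 with
  | .inr s, .inl a => .inr (M.step s a)
  | _, _ => .inr M.start

lemma lmProcess_toLM_last (w : List A) :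
    lmProcess M.toLM Sum.inl (.inr M.start) w 1 = .inr (M.eval w) := by
  induction w using List.reverseRecOn with
  | nil => rfl
  | append_singleton w a ih =>
    have h_input : pushToken (lmProcess M.toLM Sum.inl (.inr M.start) w) (.inl a) 1 = .inl a :=
      pushToken_last _ _ two_pos
    have h_state : pushToken (lmProcess M.toLM Sum.inl (.inr M.start) w) (.inl a) 0 =
        .inr (M.eval w) :=
      (pushToken_of_lt _ _ (by decide)).trans ih
    rw [lmProcess_append_singleton, lmStep]
    refine (pushToken_last _ _ two_pos).trans ?_
    rw [toLM, h_input, h_state, eval_append_singleton]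

lemma lmRecognizes_toLM_iff (w : List A) :
    lmRecognizes two_pos M.toLM Sum.inl (.inr M.start) (Sum.inr '' M.accept) w ↔
      w ∈ M.accepts := by
  rw [lmRecognizes, show (⟨2 - 1, _⟩ : Fin 2) = 1 from rfl, lmProcess_toLM_last,
    Sum.inr_injective.mem_set_image, mem_accepts]

end DFA

/--
A language `L ⊆ Σ*` over a finite alphabet `Σ` is regular (recognized by some
deterministic finite automaton) if and only if `L` is recognized by some language model with
finite context, where an LM `(Γ, δ, C)` with `Σ ⊆ Γ` (an injection `ι : Σ → Γ`), a designated
start token, and a designated accepting subset `F ⊆ Γ` recognizes a word `w = a₁…aₙ` when the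
alternating process that appends each input symbol `aᵢ` and then the LM's generated token ends
with a generated token in `F`.
-/
theorem stmt_2 (A : Type) [Fintype A] (L : Language A) :
    L.IsRegular ↔
      ∃ (Γ : Type) (_ : Fintype Γ) (C : ℕ) (hC : 0 < C) (δ : (Fin C → Γ) → Γ)
        (ι : A → Γ) (_ : Function.Injective ι) (start : Γ) (F : Set Γ),
        ∀ w : List A, w ∈ L ↔ lmRecognizes hC δ ι start F w := by
  constructor
  · rintro ⟨σ, _, M, rfl⟩
    exact ⟨A ⊕ σ, inferInstance, 2, two_pos, M.toLM, Sum.inl, Sum.inl_injective, .inr M.start,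
      Sum.inr '' M.accept, fun w => (M.lmRecognizes_toLM_iff w).symm⟩
  · rintro ⟨Γ, _, C, hC, δ, ι, -, start, F, hL⟩
    exact Language.isRegular_of_lmRecognizes hC δ ι start F hL
end

section
/- Given a Maximum-Dependency Computation Graph with N nodes and an in-degree bound C ≥ 2, there exists an equivalent Bounded Maximum-Dependency Computation Graph with exactly N + N⁺ nodes and N(N−1)/2 + N⁺·C' edges for a per-proxy constant number of edges, where N⁺ = Σ_{d=0}^{N−1} k(d) with k(d) = ⌊(d−2)/(C−1)⌋ for d ≥ 2 and k(d) = 0 otherwise; consequently the BMCG has O(N²) nodes and O(N²) edges. -/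
/-- `proxyCount C d` = `k(d)` = `⌊(d−2)/(C−1)⌋` for `d ≥ 2` and `0` otherwise: the number of
proxy nodes needed to decompose a node of in-degree `d` under the fan-in bound `C`. -/
def proxyCount (C d : ℕ) : ℕ := if 2 ≤ d then (d - 2) / (C - 1) else 0

namespace Stmt12Aux

/-- number of proxies for nodes before `N` -/
def S (C N : ℕ) : ℕ := ∑ d ∈ Finset.range N, proxyCount C d

/-- in-degree of the final (original) node of block `j` -/
def r (C j : ℕ) : ℕ := j + proxyCount C j - proxyCount C j * C

/-- in-degree of the `t`-th member of block `j` -/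
def indeg (C j t : ℕ) : ℕ := if t < proxyCount C j then C else r C j

/-- global position of the `t`-th member of block `j` -/
def pos (C j t : ℕ) : ℕ := j + S C j + t

def edges0 (C N : ℕ) : Finset (ℕ × ℕ) :=
  (Finset.range N).biUnion fun j =>
    (Finset.range (proxyCount C j + 1)).biUnion fun t =>
      (Finset.Ico (pos C j t - indeg C j t) (pos C j t)).image fun a => (a, pos C j t)

variable {C : ℕ}

lemma mulC (hC : 2 ≤ C) (k : ℕ) : k * C = k * (C - 1) + k := by
  have h : C - 1 + 1 = C := by omega
  calc k * C = k * (C - 1 + 1) := by rw [h]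
  _ = k * (C-1) + k := by ring

lemma k_le (hC : 2 ≤ C) (j : ℕ) : proxyCount C j ≤ j := by
  unfold proxyCount; split
  · exact le_trans (Nat.div_le_self _ _) (by omega)
  · omega

lemma kC_le (hC : 2 ≤ C) (j : ℕ) : proxyCount C j * C ≤ j + proxyCount C j := by
  have h3 := mulC hC (proxyCount C j)
  unfold proxyCount at *
  split at h3 <;> split
  · have h1 : (j-2)/(C-1) * (C-1) ≤ j - 2 := Nat.div_mul_le_self _ _
    omega
  all_goals omega

lemma r_add_kC (hC : 2 ≤ C) (j : ℕ) :
    r C j + proxyCount C j * C = j + proxyCount C j := by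
  have := kC_le hC j; unfold r; omega

lemma r_le (hC : 2 ≤ C) (j : ℕ) : r C j ≤ C := by
  unfold r proxyCount
  have h3 := mulC hC (proxyCount C j)
  unfold proxyCount at h3
  split <;> split at h3
  · have h1 : (C-1) * ((j-2)/(C-1)) + (j-2) % (C-1) = j - 2 := Nat.div_add_mod _ _
    have h2 : (j-2) % (C-1) < C - 1 := Nat.mod_lt _ (by omega)
    have h4 : (C-1) * ((j-2)/(C-1)) = (j-2)/(C-1) * (C-1) := by ring
    omega
  all_goals omega

lemma r_pos (hC : 2 ≤ C) {j : ℕ} (hj : 1 ≤ j) : 1 ≤ r C j := by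
  unfold r proxyCount
  have h3 := mulC hC (proxyCount C j)
  unfold proxyCount at h3
  split <;> split at h3
  · have h1 : (j-2)/(C-1) * (C-1) ≤ j - 2 := Nat.div_mul_le_self _ _
    omega
  all_goals omega

lemma r_le_j (hC : 2 ≤ C) (j : ℕ) : r C j ≤ j := by
  have := mulC hC (proxyCount C j); unfold r; omega

lemma indeg_le (hC : 2 ≤ C) (j t : ℕ) : indeg C j t ≤ C := by
  unfold indeg; split
  · exact le_refl _
  · exact r_le hC j

lemma k_pos_imp (hC : 2 ≤ C) {j : ℕ} (h : 1 ≤ proxyCount C j) : C + 1 ≤ j := by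
  unfold proxyCount at h
  split at h
  · have := (Nat.one_le_div_iff (b := C - 1) (by omega)).mp h
    omega
  · omega

lemma indeg_le_pos (hC : 2 ≤ C) (j t : ℕ) : indeg C j t ≤ pos C j t := by
  unfold indeg pos; split
  · have : 1 ≤ proxyCount C j := by omega
    have := k_pos_imp hC this
    omega
  · have := r_le_j hC j; omega

lemma S_mono : Monotone (S C) := fun a b h =>
  Finset.sum_le_sum_of_subset (Finset.range_subset_range.mpr h)

lemma S_succ (j : ℕ) : S C (j+1) = S C j + proxyCount C j := Finset.sum_range_succ _ _

lemma pos_lt_pos {j j' t t' : ℕ} (ht : t ≤ proxyCount C j) (hjj : j < j') :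
    pos C j t < pos C j' t' := by
  have h1 : S C (j+1) = S C j + proxyCount C j := S_succ j
  have h2 : S C (j+1) ≤ S C j' := S_mono hjj
  unfold pos; omega

lemma mem_edges0 {N : ℕ} {a b : ℕ} :
    (a, b) ∈ edges0 C N ↔ ∃ j < N, ∃ t < proxyCount C j + 1,
      pos C j t - indeg C j t ≤ a ∧ a < pos C j t ∧ b = pos C j t := by
  simp only [edges0, Finset.mem_biUnion, Finset.mem_range, Finset.mem_image,
    Finset.mem_Ico, Prod.mk.injEq]
  constructor
  · rintro ⟨j, hj, t, ht, x, ⟨hx1, hx2⟩, rfl, rfl⟩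
    exact ⟨j, hj, t, ht, hx1, hx2, rfl⟩
  · rintro ⟨j, hj, t, ht, h1, h2, rfl⟩
    exact ⟨j, hj, t, ht, a, ⟨h1, h2⟩, rfl, rfl⟩

lemma edge_lt {N a b : ℕ} (h : (a, b) ∈ edges0 C N) : a < b ∧ b < N + S C N := by
  rw [mem_edges0] at h
  obtain ⟨j, hj, t, ht, h1, h2, rfl⟩ := h
  refine ⟨h2, ?_⟩
  have h3 : S C (j+1) = S C j + proxyCount C j := S_succ j
  have h4 : S C (j+1) ≤ S C N := S_mono hj
  unfold pos; omega

end Stmt12Aux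

namespace Stmt12Aux
variable {C : ℕ}

lemma card_block (hC : 2 ≤ C) (j t : ℕ) :
    ((Finset.Ico (pos C j t - indeg C j t) (pos C j t)).image
      fun a => (a, pos C j t)).card = indeg C j t := by
  rw [Finset.card_image_of_injective _ (fun a b h => (Prod.mk.injEq _ _ _ _ ▸ h).1),
    Nat.card_Ico]
  have := indeg_le_pos hC j t
  omega

lemma card_inner (hC : 2 ≤ C) (j : ℕ) :
    ((Finset.range (proxyCount C j + 1)).biUnion fun t =>
      (Finset.Ico (pos C j t - indeg C j t) (pos C j t)).image
        fun a => (a, pos C j t)).card = j + proxyCount C j := by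
  rw [Finset.card_biUnion]
  · have hsum : ∀ t ∈ Finset.range (proxyCount C j + 1),
        ((Finset.Ico (pos C j t - indeg C j t) (pos C j t)).image
          fun a => (a, pos C j t)).card = indeg C j t :=
      fun t _ => card_block hC j t
    rw [Finset.sum_congr rfl hsum, Finset.sum_range_succ]
    have h1 : ∀ t ∈ Finset.range (proxyCount C j), indeg C j t = C := by
      intro t ht; simp only [Finset.mem_range] at ht; simp [indeg, ht]
    rw [Finset.sum_congr rfl h1, Finset.sum_const, Finset.card_range, smul_eq_mul]
    have h2 : indeg C j (proxyCount C j) = r C j := by simp [indeg]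
    rw [h2]
    have := r_add_kC hC j
    omega
  · intro t ht u hu htu
    simp only [Finset.disjoint_left, Finset.mem_image, Finset.mem_Ico]
    rintro ⟨a, b⟩ ⟨x, _, hx⟩ ⟨y, _, hy⟩
    have h1 := congrArg Prod.snd hx
    have h2 := congrArg Prod.snd hy
    simp only at h1 h2
    have : pos C j t ≠ pos C j u := by unfold pos; omega
    exact this (h1.trans h2.symm)

lemma card_edges0 (hC : 2 ≤ C) (N : ℕ) :
    (edges0 C N).card = N * (N-1) / 2 + S C N := by
  unfold edges0
  rw [Finset.card_biUnion]
  · rw [Finset.sum_congr rfl (fun j _ => card_inner hC j), Finset.sum_add_distrib,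
      Finset.sum_range_id]
    rfl
  · intro j hj j' hj' hjj
    simp only [Finset.disjoint_left, Finset.mem_biUnion, Finset.mem_image,
      Finset.mem_Ico, Finset.mem_range]
    rintro ⟨a, b⟩ ⟨t, ht, x, _, hx⟩ ⟨t', ht', y, _, hy⟩
    have h1 := congrArg Prod.snd hx
    have h2 := congrArg Prod.snd hy
    simp only at h1 h2
    have hb : pos C j t = pos C j' t' := h1.trans h2.symm
    rcases Nat.lt_or_ge j j' with h | h
    · exact absurd hb (Nat.ne_of_lt (pos_lt_pos (by omega) h))
    · exact absurd hb.symm (Nat.ne_of_lt (pos_lt_pos (by omega) (by omega)))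

lemma tiling (hC : 2 ≤ C) : ∀ N, ∀ v < N + S C N,
    ∃ j < N, ∃ t ≤ proxyCount C j, v = pos C j t := by
  intro N
  induction N with
  | zero => intro v hv; simp [S] at hv
  | succ n ih =>
    intro v hv
    rcases Nat.lt_or_ge v (n + S C n) with h | h
    · obtain ⟨j, hj, t, ht, rfl⟩ := ih v h
      exact ⟨j, by omega, t, ht, rfl⟩
    · refine ⟨n, by omega, v - (n + S C n), ?_, ?_⟩
      · have := S_succ (C := C) n; omega
      · unfold pos; omega

lemma chain (hC : 2 ≤ C) {N p : ℕ} (hp : 0 < p) (hpM : p < N + S C N) :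
    (p - 1, p) ∈ edges0 C N := by
  obtain ⟨j, hj, t, ht, rfl⟩ := tiling hC N p hpM
  rw [mem_edges0]
  refine ⟨j, hj, t, by omega, ?_, by omega, rfl⟩
  have hind : 1 ≤ indeg C j t := by
    unfold indeg; split
    · omega
    · refine r_pos hC ?_
      rcases Nat.eq_zero_or_pos j with rfl | h
      · exfalso
        have hk0 : proxyCount C 0 = 0 := by simp [proxyCount]
        have hS0 : S C 0 = 0 := by simp [S]
        unfold pos at hp
        omega
      · exact h
  omega

end Stmt12Aux

open Stmt12Aux

/--
Given a Maximum-Dependency Computation Graph with `N` nodes (node `j` depends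
on all nodes `i < j`, giving `N(N−1)/2` edges) and an in-degree bound `C ≥ 2`, there exists an
equivalent Bounded Maximum-Dependency Computation Graph: an acyclic digraph with exactly
`N + N⁺` nodes and `N(N−1)/2 + N⁺·C'` edges for a per-proxy constant number `C'` of edges,
where `N⁺ = Σ_{d=0}^{N−1} k(d)` with `k(d) = ⌊(d−2)/(C−1)⌋` for `d ≥ 2` and `k(d) = 0`
otherwise, in which every node has in-degree at most `C` and all original dependencies are
preserved (each original dependency is realized by a directed path through proxy nodes);
consequently the BMCG has `O(N²)` nodes and `O(N²)` edges.
-/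
theorem stmt_12 (C : ℕ) (hC : 2 ≤ C) :
    ∃ (C' : ℕ) (_ : 1 ≤ C') (c : ℕ), ∀ N : ℕ,
      ∃ (Nplus M : ℕ), Nplus = (∑ d ∈ Finset.range N, proxyCount C d) ∧
        M = N + Nplus ∧
        ∃ (E : Finset (Fin M × Fin M)) (ι : Fin N ↪ Fin M),
          -- exact node and edge counts
          E.card = N * (N - 1) / 2 + Nplus * C' ∧
          -- the in-degree of every node is at most C
          (∀ v : Fin M, (E.filter (fun e => e.2 = v)).card ≤ C) ∧
          -- the graph is acyclic
          (∀ v : Fin M, ¬ Relation.TransGen (fun a b : Fin M => (a, b) ∈ E) v v) ∧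
          -- every dependency of the MCG is preserved, via a directed path through proxies
          (∀ i j : Fin N, i < j →
            Relation.TransGen (fun a b : Fin M => (a, b) ∈ E) (ι i) (ι j)) ∧
          -- O(N²) nodes and O(N²) edges
          M ≤ c * (N ^ 2 + 1) ∧ E.card ≤ c * (N ^ 2 + 1) := by
  classical
  refine ⟨1, le_refl 1, 2, fun N => ?_⟩
  refine ⟨S C N, N + S C N, rfl, rfl, ?_⟩
  set M := N + S C N with hM
  set E : Finset (Fin M × Fin M) :=
    Finset.univ.filter (fun e => ((e.1 : ℕ), (e.2 : ℕ)) ∈ edges0 C N) with hE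
  have memE : ∀ e : Fin M × Fin M, e ∈ E ↔ ((e.1 : ℕ), (e.2 : ℕ)) ∈ edges0 C N := by
    intro e; simp [hE]
  -- cardinality
  have hcard : E.card = (edges0 C N).card := by
    apply Finset.card_bij (fun e _ => ((e.1 : ℕ), (e.2 : ℕ)))
    · intro e he; exact (memE e).mp he
    · intro e1 h1 e2 h2 h
      have ha := congrArg Prod.fst h
      have hb := congrArg Prod.snd h
      simp only at ha hb
      exact Prod.ext (Fin.ext ha) (Fin.ext hb)
    · rintro ⟨a, b⟩ hp
      obtain ⟨h1, h2⟩ := edge_lt hp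
      exact ⟨(⟨a, by omega⟩, ⟨b, h2⟩), (memE _).mpr hp, rfl⟩
  have hcardE : E.card = N * (N - 1) / 2 + S C N * 1 := by
    rw [hcard, card_edges0 hC, mul_one]
  -- in-degree bound
  have hindeg : ∀ v : Fin M, (E.filter (fun e => e.2 = v)).card ≤ C := by
    intro v
    have hle : (E.filter (fun e => e.2 = v)).card ≤ (Finset.Ico ((v:ℕ) - C) (v:ℕ)).card := by
      apply Finset.card_le_card_of_injOn (fun e => ((e.1 : Fin M) : ℕ))
      · intro e he
        simp only [Finset.mem_coe, Finset.mem_filter] at he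
        obtain ⟨heE, hev⟩ := he
        have hm := (memE e).mp heE
        rw [hev] at hm
        rw [mem_edges0] at hm
        obtain ⟨j, hj, t, ht, h1, h2, h3⟩ := hm
        have h4 := indeg_le hC j t
        simp only [Finset.mem_coe, Finset.mem_Ico]
        omega
      · intro e1 h1 e2 h2 h
        simp only [Finset.mem_coe, Finset.mem_filter] at h1 h2
        exact Prod.ext (Fin.ext h) (h1.2.trans h2.2.symm)
    rw [Nat.card_Ico] at hle
    omega
  -- acyclicity
  have hRlt : ∀ a b : Fin M, (a, b) ∈ E → (a : ℕ) < (b : ℕ) :=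
    fun a b h => (edge_lt ((memE _).mp h)).1
  have hacyc : ∀ v : Fin M, ¬ Relation.TransGen (fun a b : Fin M => (a, b) ∈ E) v v := by
    have key : ∀ a b : Fin M, Relation.TransGen (fun a b : Fin M => (a, b) ∈ E) a b →
        (a : ℕ) < (b : ℕ) := by
      intro a b h
      induction h with
      | single h => exact hRlt _ _ h
      | tail _ h2 ih => exact ih.trans (hRlt _ _ h2)
    exact fun v hv => absurd (key v v hv) (lt_irrefl _)
  -- chain edges and paths
  have hchain : ∀ w : Fin M, 0 < (w : ℕ) →
      ((⟨(w : ℕ) - 1, by omega⟩ : Fin M), w) ∈ E := by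
    intro w hw
    exact (memE _).mpr (chain hC hw w.isLt)
  have hpath : ∀ n : ℕ, ∀ hn : n < M, ∀ u : Fin M, (u : ℕ) < n →
      Relation.TransGen (fun a b : Fin M => (a, b) ∈ E) u ⟨n, hn⟩ := by
    intro n
    induction n with
    | zero => intro hn u hu; omega
    | succ m ih =>
      intro hn u hu
      have hedge := hchain ⟨m + 1, hn⟩ (Nat.succ_pos m)
      simp only [Nat.add_sub_cancel] at hedge
      rcases Nat.lt_or_ge (u : ℕ) m with h | h
      · exact (ih (by omega) u h).tail hedge
      · have huv : (u : ℕ) = m := by omega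
        have hu' : u = ⟨m, by omega⟩ := Fin.ext huv
        rw [hu']
        exact Relation.TransGen.single hedge
  -- the embedding
  have hι : ∀ i : Fin N, (i : ℕ) + S C ((i : ℕ) + 1) < M := by
    intro i
    have h2 : S C ((i : ℕ) + 1) ≤ S C N := S_mono i.isLt
    have := i.isLt
    omega
  have hmono : StrictMono (fun i : Fin N => (⟨(i : ℕ) + S C ((i : ℕ) + 1), hι i⟩ : Fin M)) := by
    intro a b hab
    have h1 : S C ((a : ℕ) + 1) ≤ S C ((b : ℕ) + 1) := S_mono (by omega)
    have h2 : (a : ℕ) < (b : ℕ) := hab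
    simp only [Fin.mk_lt_mk]
    omega
  -- bounds
  have hS_le : S C N ≤ N * N := by
    have h1 : S C N ≤ ∑ d ∈ Finset.range N, d :=
      Finset.sum_le_sum (fun d _ => k_le hC d)
    rw [Finset.sum_range_id] at h1
    have h2 : N * (N - 1) / 2 ≤ N * N :=
      le_trans (Nat.div_le_self _ _) (Nat.mul_le_mul_left _ (Nat.sub_le _ _))
    omega
  have hNN : N ≤ N * N := by
    rcases Nat.eq_zero_or_pos N with rfl | h
    · simp
    · exact Nat.le_mul_of_pos_left N h
  have hgauss : N * (N - 1) / 2 ≤ N * N :=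
    le_trans (Nat.div_le_self _ _) (Nat.mul_le_mul_left _ (Nat.sub_le _ _))
  have hsq : N ^ 2 = N * N := sq N
  refine ⟨E, ⟨_, hmono.injective⟩, hcardE, hindeg, hacyc, ?_, by omega, by omega⟩
  intro i j hij
  have hlt : ((⟨(i : ℕ) + S C ((i : ℕ) + 1), hι i⟩ : Fin M) : ℕ)
      < ((⟨(j : ℕ) + S C ((j : ℕ) + 1), hι j⟩ : Fin M) : ℕ) := hmono hij
  have h := hpath _ (hι j) _ hlt
  exact h
end

section
/- For all integers C ≥ 2 and N ≥ 3, setting K = ⌊(N−3)/(C−1)⌋ and k(d) = ⌊(d−2)/(C−1)⌋ for d ≥ 2 (and k(d) = 0 for d < 2), the total number of proxy nodes satisfies the closed form Σ_{d=0}^{N−1} k(d) = K·(N−2) − (C−1)·K(K+1)/2; in particular Σ_{d=0}^{N−1} k(d) = O(N²) and K = O(N) as N → ∞ for fixed C. -/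
lemma tri_succ (K : ℕ) : (K + 1) * (K + 2) / 2 = K * (K + 1) / 2 + (K + 1) := by
  have h : (K + 1) * (K + 2) = K * (K + 1) + (K + 1) * 2 := by ring
  rw [h, Nat.add_mul_div_right _ _ (by norm_num : (0:ℕ) < 2)]

lemma key2 (m : ℕ) (hm : 1 ≤ m) :
    ∀ n : ℕ, (∑ j ∈ Finset.range (n + 1), j / m) + m * ((n / m) * (n / m + 1) / 2)
      = (n / m) * (n + 1) := by
  intro n
  induction n with
  | zero => simp [Nat.div_eq_of_lt hm]
  | succ n IH =>
    rw [Finset.sum_range_succ]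
    have hdm := Nat.div_add_mod n m
    have hlt := Nat.mod_lt n (show 0 < m by omega)
    by_cases h : n % m + 1 = m
    · have hmul : n + 1 = m * (n / m + 1) := by rw [Nat.mul_succ]; omega
      have hd : (n + 1) / m = n / m + 1 := by
        rw [hmul, Nat.mul_div_cancel_left _ (show 0 < m by omega)]
      rw [hd, tri_succ, Nat.mul_add]
      have hm1 : m * (n / m + 1) = n + 1 := hmul.symm
      have hexp : (n / m + 1) * (n + 1 + 1) = (n / m) * (n + 1) + (n + 1) + (n / m + 1) := by
        ring
      linarith [IH]
    · have hd : (n + 1) / m = n / m := by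
        have : n + 1 = (n % m + 1) + m * (n / m) := by omega
        rw [this, Nat.add_mul_div_left _ _ (show 0 < m by omega),
          Nat.div_eq_of_lt (by omega)]
        omega
      rw [hd]
      have hexp : (n / m) * (n + 1 + 1) = (n / m) * (n + 1) + n / m := by ring
      linarith [IH]

lemma shift (C : ℕ) :
    ∀ n : ℕ, ∑ d ∈ Finset.range (n + 2), proxyCount C d = ∑ j ∈ Finset.range n, j / (C - 1) := by
  intro n
  induction n with
  | zero =>
    refine Finset.sum_eq_zero fun d hd => ?_
    have := Finset.mem_range.mp hd
    simp only [proxyCount]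
    split <;> omega
  | succ n IH =>
    rw [show n + 1 + 2 = (n + 2) + 1 from rfl,
      Finset.sum_range_succ (fun d => proxyCount C d) (n + 2),
      Finset.sum_range_succ (fun j => j / (C - 1)) n, IH]
    simp [proxyCount]

/--
For all integers `C ≥ 2` and `N ≥ 3`, setting `K = ⌊(N−3)/(C−1)⌋`,
the total number of proxy nodes satisfies the closed form
`Σ_{d=0}^{N−1} k(d) = K·(N−2) − (C−1)·K(K+1)/2`; in particular
`Σ_{d=0}^{N−1} k(d) = O(N²)` and `K = O(N)` as `N → ∞` for fixed `C`.
-/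
theorem stmt_13 (C : ℕ) (hC : 2 ≤ C) :
    (∀ N : ℕ, 3 ≤ N →
      ∑ d ∈ Finset.range N, proxyCount C d =
        ((N - 3) / (C - 1)) * (N - 2)
          - (C - 1) * (((N - 3) / (C - 1)) * ((N - 3) / (C - 1) + 1) / 2)) ∧
    (∃ c : ℕ, ∀ N : ℕ, 3 ≤ N →
      (∑ d ∈ Finset.range N, proxyCount C d) ≤ c * N ^ 2 ∧
      (N - 3) / (C - 1) ≤ c * N) := by
  have hm : 1 ≤ C - 1 := by omega
  constructor
  · intro N hN
    have hN' : N = (N - 3) + 1 + 2 := by omega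
    have hN2 : N - 2 = (N - 3) + 1 := by omega
    rw [hN2]
    calc ∑ d ∈ Finset.range N, proxyCount C d
        = ∑ j ∈ Finset.range (N - 3 + 1), j / (C - 1) := by rw [hN']; exact shift C _
      _ = ((N - 3) / (C - 1)) * (N - 3 + 1)
            - (C - 1) * (((N - 3) / (C - 1)) * ((N - 3) / (C - 1) + 1) / 2) :=
          Nat.eq_sub_of_add_eq (key2 (C - 1) hm (N - 3))
  · refine ⟨1, fun N hN => ⟨?_, ?_⟩⟩
    · have hb : ∀ d ∈ Finset.range N, proxyCount C d ≤ N := by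
        intro d hd
        have hdN : d < N := Finset.mem_range.mp hd
        unfold proxyCount
        split
        · exact le_trans (Nat.div_le_self _ _) (by omega)
        · omega
      calc ∑ d ∈ Finset.range N, proxyCount C d
          ≤ ∑ _d ∈ Finset.range N, N := Finset.sum_le_sum hb
        _ = N * N := by simp [Finset.sum_const, mul_comm]
        _ ≤ 1 * N ^ 2 := by rw [one_mul, pow_two]
    · calc (N - 3) / (C - 1) ≤ N - 3 := Nat.div_le_self _ _
        _ ≤ 1 * N := by omega
end
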